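/- arXiv:2212.12728 — 2 statements merged into one kernel-verified Lean document; each statement's English description precedes it below -/
import Mathlib

section
/- For each i ∈ {0,…,n}, the map φ : (π_0,…,π_{s−1}, 0_{c_{b_i}}) ↦ (π_0,…,π_{s−1}, ω_i) is a bijection from P_{i,ρ} to P_ρ^{ω_i}, where ω_0 = (−1)_{c_{\bar 1,\bar 1}} and ω_i = 0_{c_{i,\overline{i+1}}} for i ∈ {1,…,n} (with the convention \overline{n+1} = n), and P_ρ^{ω_i} is the set of finite sequences of secondary-coloured integers whose consecutive parts satisfy ≫_ρ and whose last part equals ω_i. -/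
open Classical

open Classical in
/-- `chi P` is 1 if `P` holds and 0 otherwise. -/
noncomputable def chi (P : Prop) : ℤ := if P then 1 else 0

/-- The involution `x ↦ 2n+1-x` on `{1,…,2n}` (the set `\overline{[n]}`). -/
def bar (n : ℕ) (x : ℤ) : ℤ := 2 * (n : ℤ) + 1 - x

/-- The energy formula `H'((x,y) ⊗ (x',y'))`. -/
noncomputable def Hprime (n : ℕ) (x y x' y' : ℤ) : ℤ :=
  if bar n y' ≠ x then
    chi (x' ≤ x) + chi (y' ≤ y) - chi (y' ≤ y ∧ x < y' ∧ x' ≤ x)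
  else
    chi (x' < x) + chi (y' < y) - chi (y' < y ∧ x < y' ∧ x' < x)

/-- The energy function `H(b ⊗ b')` on the level 1 perfect crystal
`B = {∅} ⊔ {(x,y) : x ≤ y ∈ \overline{[n]}}` of type `C_n^{(1)}`
(`none` plays the role of the vertex `∅`). -/
noncomputable def Hfun (n : ℕ) : Option (ℤ × ℤ) → Option (ℤ × ℤ) → ℤ
  | none, none => 0
  | none, some _ => 1
  | some _, none => 1
  | some p, some q => Hprime n p.1 p.2 q.1 q.2

/-- The set of vertices `B = {∅} ⊔ {(x,y) : x ≤ y ∈ \overline{[n]}}` (as colours `c_b`). -/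
def BSet (n : ℕ) : Set (Option (ℤ × ℤ)) :=
  {none} ∪ {b | ∃ x y : ℤ, b = some (x, y) ∧ 1 ≤ x ∧ x ≤ y ∧ y ≤ 2 * (n : ℤ)}

/-- The secondary colours `S = C ∖ {c_∅}`. -/
def SColSet (n : ℕ) : Set (Option (ℤ × ℤ)) :=
  {b | ∃ x y : ℤ, b = some (x, y) ∧ 1 ≤ x ∧ x ≤ y ∧ y ≤ 2 * (n : ℤ)}

/-- The vertex `b_i`: `b_0 = ∅` and `b_i = (i, \bar i)` for `1 ≤ i ≤ n`. -/
def bvert (n i : ℕ) : Option (ℤ × ℤ) :=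
  if i = 0 then none else some ((i : ℤ), bar n (i : ℤ))

/-- The function `ρ` on secondary colours:
`ρ(c_{x',y'},c_{x,y}) = χ(x ≥ x') + χ(y ≥ y') - χ(y ≥ y' > x ≥ x')`. -/
noncomputable def rhoS : Option (ℤ × ℤ) → Option (ℤ × ℤ) → ℤ
  | some p, some q =>
      chi (p.1 ≤ q.1) + chi (p.2 ≤ q.2) - chi (p.2 ≤ q.2 ∧ q.1 < p.2 ∧ p.1 ≤ q.1)
  | _, _ => 0

/-- The set `P^{≫}_{c_{b_i}}` of grounded partitions with ground `c_{b_i}` and relation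
`≫` given by the energy `H`: sequences `(π_0,…,π_{s-1}, π_s = 0_{c_{b_i}})` with colours in
`C`, with `π_{s-1} ≠ 0_{c_{b_i}}` when `s > 0`, and `k - k' ≥ H(b' ⊗ b)` for consecutive
parts `k_{c_b}, k'_{c_{b'}}`. -/
noncomputable def PGround (n i : ℕ) : Set (List (ℤ × Option (ℤ × ℤ))) :=
  {π | π.getLast? = some (0, bvert n i) ∧
       (∀ a ∈ π, a.2 ∈ BSet n) ∧
       π.Chain' (fun a b => a.1 - b.1 ≥ Hfun n b.2 a.2) ∧
       (π.dropLast ≠ [] → π.dropLast.getLast? ≠ some (0, bvert n i))}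

/-- The set `P_{i,ρ}`: sequences `(π_0,…,π_{s-1}, 0_{c_{b_i}})` with `π_0,…,π_{s-1}`
coloured by secondary colours, `|π_j| - |π_{j+1}| ≥ ρ_i(c(π_j),c(π_{j+1}))`, and the last
part `π_{s-1} = k_{c_b}` satisfying `k ≥ H(b_i ⊗ b)` if `c_b ≠ c_{b_i}` and `k ≥ 1` if
`c_b = c_{b_i}`. -/
noncomputable def PiRho (n i : ℕ) : Set (List (ℤ × Option (ℤ × ℤ))) :=
  {π | π.getLast? = some (0, bvert n i) ∧
       (∀ a ∈ π.dropLast, a.2 ∈ SColSet n) ∧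
       π.dropLast.Chain' (fun a b => a.1 - b.1 ≥ rhoS a.2 b.2) ∧
       (∀ a, π.dropLast.getLast? = some a →
          ((a.2 = bvert n i → 1 ≤ a.1) ∧
           (a.2 ≠ bvert n i → Hfun n (bvert n i) a.2 ≤ a.1)))}


/-- The part `ω_i`: `ω_0 = (-1)_{c_{\bar 1,\bar 1}}` and `ω_i = 0_{c_{i,\overline{i+1}}}`
for `1 ≤ i ≤ n` (with the convention `\overline{n+1} = n`, so that the colour of `ω_i`
is `(i, 2n-i)`). -/
def omegaEl (n i : ℕ) : ℤ × (ℤ × ℤ) :=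
  if i = 0 then ((-1 : ℤ), ((2 * (n : ℤ)), (2 * (n : ℤ))))
  else ((0 : ℤ), ((i : ℤ), 2 * (n : ℤ) - (i : ℤ)))

/-- `P_ρ^{ω_i}`: finite sequences of secondary-coloured integers whose consecutive parts
satisfy `≫_ρ` and whose last part equals `ω_i`. -/
noncomputable def POmega (n i : ℕ) : Set (List (ℤ × Option (ℤ × ℤ))) :=
  {π | π.getLast? = some ((omegaEl n i).1, some (omegaEl n i).2) ∧
       (∀ a ∈ π, a.2 ∈ SColSet n) ∧
       π.Chain' (fun a b => a.1 - b.1 ≥ rhoS a.2 b.2)}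

lemma eq_concat_of_getLast? {α : Type*} {l : List α} {a : α}
    (h : l.getLast? = some a) : l = l.dropLast ++ [a] := by
  have hne : l ≠ [] := by rintro rfl; simp at h
  rw [List.getLast?_eq_getLast hne, Option.some.injEq] at h
  rw [← h]
  exact (List.dropLast_append_getLast hne).symm

lemma omega_col_mem (n i : ℕ) (hn : 2 ≤ n) (hi : i ≤ n) :
    (some (omegaEl n i).2 : Option (ℤ × ℤ)) ∈ SColSet n := by
  rcases Nat.eq_zero_or_pos i with h0 | hpos
  · subst h0
    exact ⟨2 * (n : ℤ), 2 * (n : ℤ), rfl, by omega, le_refl _, le_refl _⟩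
  · have h0 : i ≠ 0 := hpos.ne'
    refine ⟨(i : ℤ), 2 * (n : ℤ) - (i : ℤ), by simp [omegaEl, h0], ?_, ?_, ?_⟩ <;> omega

lemma key (n i : ℕ) (hn : 2 ≤ n) (hi : i ≤ n) (k x y : ℤ)
    (hx : 1 ≤ x) (hxy : x ≤ y) (hy : y ≤ 2 * (n : ℤ)) :
    (k - (omegaEl n i).1 ≥ rhoS (some (x, y)) (some (omegaEl n i).2)) ↔
    ((some (x, y) = bvert n i → 1 ≤ k) ∧
     (some (x, y) ≠ bvert n i → Hfun n (bvert n i) (some (x, y)) ≤ k)) := by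
  have e1 : ∀ p : ℤ × ℤ, Hfun n none (some p) = 1 := fun _ => rfl
  have e2 : ∀ p q : ℤ × ℤ, Hfun n (some p) (some q) = Hprime n p.1 p.2 q.1 q.2 :=
    fun _ _ => rfl
  rcases Nat.eq_zero_or_pos i with h0 | hpos
  · subst h0
    simp only [omegaEl, bvert, if_pos rfl, e1, rhoS, chi]
    norm_num
    split_ifs <;> simp_all <;> omega
  · have h0 : i ≠ 0 := hpos.ne'
    simp only [omegaEl, bvert, rhoS, chi, if_neg h0, Option.some.injEq, Prod.mk.injEq,
      e2, Hprime, bar, ne_eq]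
    have hin : (i : ℤ) ≤ n := by exact_mod_cast hi
    have hi1 : (1 : ℤ) ≤ i := by exact_mod_cast hpos
    split_ifs <;> omega

/-- for each `i ∈ {0,…,n}`, the map
`φ : (π_0,…,π_{s-1}, 0_{c_{b_i}}) ↦ (π_0,…,π_{s-1}, ω_i)` is a bijection from `P_{i,ρ}`
to `P_ρ^{ω_i}`. -/
theorem stmt_14 (n : ℕ) (hn : 2 ≤ n) (i : ℕ) (hi : i ≤ n) :
    Set.BijOn
      (fun π : List (ℤ × Option (ℤ × ℤ)) =>
        π.dropLast ++ [((omegaEl n i).1, some (omegaEl n i).2)])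
      (PiRho n i) (POmega n i) := by
  set ω : ℤ × Option (ℤ × ℤ) := ((omegaEl n i).1, some (omegaEl n i).2) with hω
  refine ⟨?_, ?_, ?_⟩
  · -- MapsTo
    rintro π ⟨h1, h2, h3, h4⟩
    refine ⟨List.getLast?_concat, ?_, ?_⟩
    · intro a ha
      rcases List.mem_append.mp ha with ha | ha
      · exact h2 a ha
      · have : a = ω := by simpa using ha
        subst this
        exact omega_col_mem n i hn hi
    · rw [List.Chain', List.isChain_append]
      refine ⟨h3, List.isChain_singleton _, ?_⟩
      intro a ha b hb
      have hb' : b = ω := by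
        rw [Option.mem_def] at hb; exact (by simpa using hb : ω = b).symm
      subst hb'
      have hal : π.dropLast.getLast? = some a := Option.mem_def.mp ha
      obtain ⟨x, y, hxy, hx1, hxy2, hy2⟩ := h2 a (List.mem_of_mem_getLast? hal)
      have h4' := h4 a hal
      rw [hxy] at h4' ⊢
      exact (key n i hn hi a.1 x y hx1 hxy2 hy2).mpr h4'
  · -- InjOn
    intro π1 hπ1 π2 hπ2 heq
    have e1 : π1 = π1.dropLast ++ [((0 : ℤ), bvert n i)] := eq_concat_of_getLast? hπ1.1
    have e2 : π2 = π2.dropLast ++ [((0 : ℤ), bvert n i)] := eq_concat_of_getLast? hπ2.1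
    have hd : π1.dropLast = π2.dropLast := by
      simpa using congrArg List.dropLast heq
    rw [e1, e2, hd]
  · -- SurjOn
    rintro σ ⟨h1, h2, h3⟩
    have hσeq : σ = σ.dropLast ++ [ω] := eq_concat_of_getLast? h1
    refine ⟨σ.dropLast ++ [((0 : ℤ), bvert n i)], ⟨?_, ?_, ?_, ?_⟩, ?_⟩
    · exact List.getLast?_concat
    · rw [List.dropLast_concat]
      intro a ha
      exact h2 a (by rw [hσeq]; exact List.mem_append_left _ ha)
    · rw [List.dropLast_concat]
      rw [hσeq, List.Chain', List.isChain_append] at h3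
      exact h3.1
    · rw [List.dropLast_concat]
      intro a ha
      rw [hσeq, List.Chain', List.isChain_append] at h3
      have hrel : a.1 - ω.1 ≥ rhoS a.2 ω.2 :=
        h3.2.2 a (Option.mem_def.mpr ha) ω (by simp)
      have haσ : a ∈ σ := by
        rw [hσeq]; exact List.mem_append_left _ (List.mem_of_mem_getLast? ha)
      obtain ⟨x, y, hxy, hx1, hxy2, hy2⟩ := h2 a haσ
      rw [hxy] at hrel ⊢
      exact (key n i hn hi a.1 x y hx1 hxy2 hy2).mp hrel
    · simp only [List.dropLast_concat]
      exact hσeq.symm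
end

section
/- For each i ∈ {0,…,n}, the map (π_0,…,π_{s−1}, 0_{c_{b_i}}) ↦ ((η(π_0),…,η(π_{s−1}), η(ω_i)), (ζ(π_0),…,ζ(π_{s−1}), ζ(ω_i))) is a bijection from P_{i,ρ} to F^{0_{c_{\overline{i+1}}}, 0_{c_i}}_> when i ∈ {1,…,n}, and to F^{0_{c_{\bar 1}}, (−1)_{c_{\bar 1}}}_> when i = 0; moreover this bijection preserves the size and the colour sequence of all the parts except the last. -/
open Classical

/-- A primary-coloured integer `k_{c_u}` is the pair `(k, u)`. -/
abbrev PCInt : Type := ℤ × ℤ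

/-- A secondary-coloured integer `k_{c_{x,y}}` is the pair `(k, (x, y))` with `x ≤ y`. -/
abbrev SCInt : Type := ℤ × (ℤ × ℤ)

/-- The order on primary-coloured integers: `k_{c_u} ≥ l_{c_v} ↔ k - l ≥ χ(u < v)`. -/
def pge (a b : PCInt) : Prop := a.1 - b.1 ≥ if a.2 < b.2 then 1 else 0

/-- The strict order on primary-coloured integers: `k_{c_u} > l_{c_v} ↔ k - l ≥ χ(u ≤ v)`. -/
def pgt (a b : PCInt) : Prop := a.1 - b.1 ≥ if a.2 ≤ b.2 then 1 else 0

/-- `u` is a valid primary colour: `u ∈ O = {1,…,m}`. -/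
def PVal (m : ℕ) (u : ℤ) : Prop := 1 ≤ u ∧ u ≤ (m : ℤ)

/-- `(x,y)` is a valid secondary colour: `x ≤ y ∈ O = {1,…,m}`. -/
def SVal (m : ℕ) (c : ℤ × ℤ) : Prop := 1 ≤ c.1 ∧ c.1 ≤ c.2 ∧ c.2 ≤ (m : ℤ)

/-- `η(2k_{c_{x,y}}) = k_{c_y}` and `η((2k+1)_{c_{x,y}}) = (k+1)_{c_x}`. -/
def etaP (a : SCInt) : PCInt :=
  if a.1 % 2 = 0 then (a.1 / 2, a.2.2) else ((a.1 - 1) / 2 + 1, a.2.1)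

/-- `ζ(2k_{c_{x,y}}) = k_{c_x}` and `ζ((2k+1)_{c_{x,y}}) = k_{c_y}`. -/
def zetaP (a : SCInt) : PCInt :=
  if a.1 % 2 = 0 then (a.1 / 2, a.2.1) else ((a.1 - 1) / 2, a.2.2)


/-- `F^{k_c,l_d}_>`: the `C_n^{(1)}`-Frobenius partitions with relation `>` and ground
`k_c, l_d` — pairs `(μ,ν)` of sequences of primary-coloured integers of the same length,
strictly decreasing for `>`, with last parts `k_c` and `l_d`, and satisfying
`ν_j + 1 ≥ μ_j ≥ ν_j` for all `j < s`. -/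
def FrobSet (m : ℕ) (kc ld : PCInt) : Set (List PCInt × List PCInt) :=
  {mn | mn.1.length = mn.2.length ∧
        mn.1.getLast? = some kc ∧ mn.2.getLast? = some ld ∧
        (∀ a ∈ mn.1, PVal m a.2) ∧ (∀ a ∈ mn.2, PVal m a.2) ∧
        mn.1.Chain' pgt ∧ mn.2.Chain' pgt ∧
        (∀ j : ℕ, j + 1 < mn.1.length → ∀ a b : PCInt,
          mn.1[j]? = some a → mn.2[j]? = some b →
          pge a b ∧ pge (b.1 + 1, b.2) a)}


/-- `η(ω_i)`: equal to `0_{c_{\bar 1}}` for `i = 0` and `0_{c_{\overline{i+1}}}` for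
`1 ≤ i ≤ n`. -/
def grEta (n i : ℕ) : PCInt :=
  if i = 0 then ((0 : ℤ), 2 * (n : ℤ)) else ((0 : ℤ), 2 * (n : ℤ) - (i : ℤ))

/-- `ζ(ω_i)`: equal to `(-1)_{c_{\bar 1}}` for `i = 0` and `0_{c_i}` for `1 ≤ i ≤ n`. -/
def grZeta (n i : ℕ) : PCInt :=
  if i = 0 then ((-1 : ℤ), 2 * (n : ℤ)) else ((0 : ℤ), (i : ℤ))

/-!
`η` and `ζ` split a secondary-coloured part `k_{c_{x,y}}` into two primary-coloured parts of
total size `k` and colours `{x, y}`. On parts with `x ≤ y` this is a bijection onto the pairs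
`(μ, ν)` with `ν + 1 ≥ μ ≥ ν`, inverted by `mergeP`. A case check shows that `π ≫_ρ π'` holds
exactly when `η(π) > η(π')` and `ζ(π) > ζ(π')`, and that the condition on the last part of an
element of `P_{i,ρ}` is the same statement with `π' = ω_i`. Applying `η` and `ζ` partwise thus
turns `ρ`-chains into pairs of `>`-chains, and the ground `0_{c_{b_i}}` into `(η(ω_i), ζ(ω_i))`.
-/

/-- Equal halves come from an even part, whose `η` carries the larger colour. -/
def mergeP (a b : PCInt) : SCInt :=
  (a.1 + b.1, if a.1 = b.1 then (b.2, a.2) else (a.2, b.2))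

def Interlaced (a b : PCInt) : Prop := pge a b ∧ pge (b.1 + 1, b.2) a

def ggRho (a b : SCInt) : Prop := a.1 - b.1 ≥ rhoS (some a.2) (some b.2)

section SCInt

variable {a b : SCInt}

lemma interlaced_etaP_zetaP (h : a.2.1 ≤ a.2.2) : Interlaced (etaP a) (zetaP a) := by
  obtain ⟨k, x, y⟩ := a
  simp only [Interlaced, pge, etaP, zetaP] at *
  split_ifs <;> omega

lemma mergeP_etaP_zetaP (h : a.2.1 ≤ a.2.2) : mergeP (etaP a) (zetaP a) = a := by
  obtain ⟨k, x, y⟩ := a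
  simp only [mergeP, etaP, zetaP] at *
  split_ifs <;> ext <;> simp only <;> omega

lemma etaP_mergeP {c d : PCInt} (h : Interlaced c d) : etaP (mergeP c d) = c := by
  obtain ⟨k, u⟩ := c; obtain ⟨l, v⟩ := d
  simp only [Interlaced, pge, etaP, mergeP] at *
  split_ifs at * <;> ext <;> simp only <;> omega

lemma zetaP_mergeP {c d : PCInt} (h : Interlaced c d) : zetaP (mergeP c d) = d := by
  obtain ⟨k, u⟩ := c; obtain ⟨l, v⟩ := d
  simp only [Interlaced, pge, zetaP, mergeP] at *
  split_ifs at * <;> ext <;> simp only <;> omega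

lemma sVal_mergeP {m : ℕ} {c d : PCInt} (h : Interlaced c d) (hc : PVal m c.2)
    (hd : PVal m d.2) : SVal m (mergeP c d).2 := by
  obtain ⟨k, u⟩ := c; obtain ⟨l, v⟩ := d
  simp only [Interlaced, pge, PVal, SVal, mergeP] at *
  split_ifs at * <;> omega

lemma pVal_etaP {m : ℕ} (h : SVal m a.2) : PVal m (etaP a).2 := by
  obtain ⟨k, x, y⟩ := a
  simp only [SVal, PVal, etaP] at *
  split_ifs <;> omega

lemma pVal_zetaP {m : ℕ} (h : SVal m a.2) : PVal m (zetaP a).2 := by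
  obtain ⟨k, x, y⟩ := a
  simp only [SVal, PVal, zetaP] at *
  split_ifs <;> omega

lemma ggRho_iff (ha : a.2.1 ≤ a.2.2) (hb : b.2.1 ≤ b.2.2) :
    ggRho a b ↔ pgt (etaP a) (etaP b) ∧ pgt (zetaP a) (zetaP b) := by
  obtain ⟨k, x, y⟩ := a; obtain ⟨l, x', y'⟩ := b
  simp only [ggRho, rhoS, chi, pgt, etaP, zetaP] at *
  split_ifs <;> omega

lemma fst_etaP_add_fst_zetaP (a : SCInt) : (etaP a).1 + (zetaP a).1 = a.1 := by
  simp only [etaP, zetaP]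
  split_ifs <;> omega

lemma pair_eq_snd_etaP_zetaP (a : SCInt) :
    ({a.2.1, a.2.2} : Multiset ℤ) = {(etaP a).2, (zetaP a).2} := by
  simp only [etaP, zetaP]
  split_ifs
  · exact Multiset.pair_comm _ _
  · rfl

lemma lastPart_iff_pgt_grEta_grZeta {n i : ℕ} (hi : i ≤ n) (ha : SVal (2 * n) a.2) :
    ((some a.2 = bvert n i → 1 ≤ a.1) ∧
      (some a.2 ≠ bvert n i → Hfun n (bvert n i) (some a.2) ≤ a.1)) ↔
    pgt (etaP a) (grEta n i) ∧ pgt (zetaP a) (grZeta n i) := by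
  obtain ⟨k, x, y⟩ := a
  simp only [SVal] at ha
  rcases Nat.eq_zero_or_pos i with rfl | hi0
  · simp only [bvert, grEta, grZeta, pgt, etaP, zetaP, Hfun, if_true, reduceCtorEq,
      false_implies, true_and, ne_eq, not_false_eq_true, true_implies, apply_ite Prod.fst,
      apply_ite Prod.snd]
    split_ifs <;> omega
  · simp only [bvert, hi0.ne', grEta, grZeta, pgt, etaP, zetaP, Hfun, Hprime, bar, chi,
      if_false, ne_eq, Option.some.injEq, Prod.mk.injEq, apply_ite Prod.fst, apply_ite Prod.snd]
    split_ifs <;> omega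

end SCInt

theorem List.isChain_and {α : Type*} {R S : α → α → Prop} {l : List α} :
    l.IsChain (fun a b => R a b ∧ S a b) ↔ l.IsChain R ∧ l.IsChain S := by
  simp only [List.isChain_iff_getElem, forall_and]

theorem List.isChain_append_singleton {α : Type*} {R : α → α → Prop} {l : List α} {c : α} :
    (l ++ [c]).IsChain R ↔ l.IsChain R ∧ ∀ a ∈ l.getLast?, R a c := by
  simp [List.isChain_append]

def RhoChain (m : ℕ) (kc ld : PCInt) (L : List SCInt) : Prop :=
  (∀ a ∈ L, SVal m a.2) ∧ L.IsChain ggRho ∧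
    ∀ a ∈ L.getLast?, pgt (etaP a) kc ∧ pgt (zetaP a) ld

section FrobSet

variable {m : ℕ} {kc ld : PCInt} {L : List SCInt}

lemma isChain_ggRho_iff (hL : ∀ a ∈ L, a.2.1 ≤ a.2.2) :
    L.IsChain ggRho ↔ (L.map etaP).IsChain pgt ∧ (L.map zetaP).IsChain pgt := by
  rw [List.isChain_map, List.isChain_map, ← List.isChain_and]
  exact List.IsChain.iff_of_mem_imp fun a b ha hb => ggRho_iff (hL a ha) (hL b hb)

lemma zipWith_mergeP_map_etaP_map_zetaP (hL : ∀ a ∈ L, a.2.1 ≤ a.2.2) :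
    List.zipWith mergeP (L.map etaP) (L.map zetaP) = L := by
  rw [List.zipWith_map, List.zipWith_self]
  exact (List.map_congr_left fun a ha => mergeP_etaP_zetaP (hL a ha)).trans L.map_id

lemma exists_map_etaP_zetaP_of_forall₂ {M N : List PCInt}
    (h : List.Forall₂ (fun c d => Interlaced c d ∧ PVal m c.2 ∧ PVal m d.2) M N) :
    ∃ L : List SCInt, (∀ a ∈ L, SVal m a.2) ∧ L.map etaP = M ∧ L.map zetaP = N := by
  induction h with
  | nil => exact ⟨[], by simp⟩
  | @cons c d M N hcd _ ih =>
    obtain ⟨hint, hc, hd⟩ := hcd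
    obtain ⟨L, hL, rfl, rfl⟩ := ih
    refine ⟨mergeP c d :: L, ?_, ?_, ?_⟩
    · exact List.forall_mem_cons.2 ⟨sVal_mergeP hint hc hd, hL⟩
    · simp [etaP_mergeP hint]
    · simp [zetaP_mergeP hint]

lemma map_append_mem_FrobSet_iff (hL : ∀ a ∈ L, SVal m a.2) :
    (L.map etaP ++ [kc], L.map zetaP ++ [ld]) ∈ FrobSet m kc ld ↔
      PVal m kc.2 ∧ PVal m ld.2 ∧ RhoChain m kc ld L := by
  have hle : ∀ a ∈ L, a.2.1 ≤ a.2.2 := fun a ha => (hL a ha).2.1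
  have hinter : ∀ j, j + 1 < (L.map etaP ++ [kc]).length → ∀ c d : PCInt,
      (L.map etaP ++ [kc])[j]? = some c → (L.map zetaP ++ [ld])[j]? = some d →
        pge c d ∧ pge (d.1 + 1, d.2) c := by
    intro j hj c d hc hd
    have hj : j < L.length := by simpa using hj
    rw [List.getElem?_append_left (by simpa using hj), List.getElem?_map,
      List.getElem?_eq_getElem hj, Option.map_some, Option.some.injEq] at hc hd
    subst hc hd
    exact interlaced_etaP_zetaP (hle _ (List.getElem_mem hj))
  have hPη : ∀ c ∈ L.map etaP, PVal m c.2 := List.forall_mem_map.2 fun a ha => pVal_etaP (hL a ha)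
  have hPζ : ∀ d ∈ L.map zetaP, PVal m d.2 :=
    List.forall_mem_map.2 fun a ha => pVal_zetaP (hL a ha)
  constructor
  · rintro ⟨-, -, -, hPμ, hPν, hμ, hν, -⟩
    rw [List.Chain', List.isChain_append_singleton, List.getLast?_map] at hμ hν
    exact ⟨hPμ kc (by simp), hPν ld (by simp), hL, (isChain_ggRho_iff hle).2 ⟨hμ.1, hν.1⟩,
      fun a ha => ⟨hμ.2 _ (Option.mem_map_of_mem _ ha), hν.2 _ (Option.mem_map_of_mem _ ha)⟩⟩
  · rintro ⟨hkc, hld, -, hchain, hlast⟩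
    rw [isChain_ggRho_iff hle] at hchain
    refine ⟨by simp, by simp, by simp, List.forall_mem_append.2 ⟨hPη, by simpa⟩,
      List.forall_mem_append.2 ⟨hPζ, by simpa⟩, ?_, ?_, hinter⟩
    · rw [List.Chain', List.isChain_append_singleton, List.getLast?_map]
      exact ⟨hchain.1, Option.forall_mem_map.2 fun a ha => (hlast a ha).1⟩
    · rw [List.Chain', List.isChain_append_singleton, List.getLast?_map]
      exact ⟨hchain.2, Option.forall_mem_map.2 fun a ha => (hlast a ha).2⟩

lemma exists_eq_map_append_of_mem_FrobSet {μ ν : List PCInt} (h : (μ, ν) ∈ FrobSet m kc ld) :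
    ∃ L : List SCInt, (∀ a ∈ L, SVal m a.2) ∧ μ = L.map etaP ++ [kc] ∧
      ν = L.map zetaP ++ [ld] := by
  obtain ⟨hlen, hμ, hν, hPμ, hPν, -, -, hinter⟩ := h
  obtain ⟨M, rfl⟩ : ∃ M, μ = M ++ [kc] := ⟨_, (List.dropLast_append_getLast? _ hμ).symm⟩
  obtain ⟨N, rfl⟩ : ∃ N, ν = N ++ [ld] := ⟨_, (List.dropLast_append_getLast? _ hν).symm⟩
  suffices List.Forall₂ (fun c d => Interlaced c d ∧ PVal m c.2 ∧ PVal m d.2) M N by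
    obtain ⟨L, hL, rfl, rfl⟩ := exists_map_etaP_zetaP_of_forall₂ this
    exact ⟨L, hL, rfl, rfl⟩
  refine List.forall₂_iff_get.2 ⟨by simpa using hlen, fun j hjM hjN => ⟨?_, ?_, ?_⟩⟩
  · exact hinter j (by simpa using hjM) _ _ (by simp [List.getElem?_append_left hjM])
      (by simp [List.getElem?_append_left hjN])
  · exact hPμ _ (by simp)
  · exact hPν _ (by simp)

end FrobSet

def ofSC (a : SCInt) : ℤ × Option (ℤ × ℤ) := (a.1, some a.2)

section PiRho

variable {n i : ℕ}

lemma exists_eq_map_ofSC_append_of_mem_PiRho {π : List (ℤ × Option (ℤ × ℤ))}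
    (h : π ∈ PiRho n i) : ∃ L : List SCInt, π = L.map ofSC ++ [(0, bvert n i)] := by
  obtain ⟨hlast, hcol, -, -⟩ := h
  refine ⟨π.dropLast.map fun a => (a.1, a.2.getD (0, 0)), ?_⟩
  rw [List.map_map, List.map_congr_left fun a ha => ?_, List.map_id,
    List.dropLast_append_getLast? _ hlast]
  obtain ⟨k, c⟩ := a
  obtain ⟨x, y, rfl, -⟩ := hcol _ ha
  rfl

lemma some_mem_SColSet_iff {c : ℤ × ℤ} : some c ∈ SColSet n ↔ SVal (2 * n) c := by
  obtain ⟨x, y⟩ := c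
  simp [SColSet, SVal]

lemma map_ofSC_append_mem_PiRho_iff (hi : i ≤ n) {L : List SCInt} :
    L.map ofSC ++ [(0, bvert n i)] ∈ PiRho n i ↔ RhoChain (2 * n) (grEta n i) (grZeta n i) L := by
  simp only [PiRho, RhoChain, Set.mem_ofPred_eq, List.getLast?_concat, List.dropLast_concat,
    List.forall_mem_map, List.getLast?_map, true_and]
  rw [show (∀ a ∈ L, (ofSC a).2 ∈ SColSet n) ↔ ∀ a ∈ L, SVal (2 * n) a.2 from
    forall₂_congr fun a _ => some_mem_SColSet_iff]
  refine and_congr_right fun hval => and_congr (List.isChain_map ofSC) ?_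
  refine Option.forall_mem_map.trans (forall₂_congr fun a ha => ?_)
  exact lastPart_iff_pgt_grEta_grZeta hi (hval a (List.mem_of_mem_getLast? ha))

end PiRho

lemma sum_map_fst_eq_add (L : List SCInt) :
    (L.map Prod.fst).sum = (L.map fun a => (etaP a).1).sum + (L.map fun a => (zetaP a).1).sum := by
  rw [← List.sum_map_add]
  exact congrArg List.sum (List.map_congr_left fun a _ => (fst_etaP_add_fst_zetaP a).symm)

lemma sum_map_pair_eq_add (L : List SCInt) :
    (L.map fun a => ({a.2.1, a.2.2} : Multiset ℤ)).sum =
      ((L.map fun a => (etaP a).2 : List ℤ) : Multiset ℤ) +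
        ((L.map fun a => (zetaP a).2 : List ℤ) : Multiset ℤ) := by
  induction L with
  | nil => rfl
  | cons a L ih =>
    rw [List.map_cons, List.sum_cons, ih, pair_eq_snd_etaP_zetaP]
    simp only [List.map_cons, ← Multiset.cons_coe, Multiset.insert_eq_cons,
      ← Multiset.singleton_add]
    abel

/-- for each `i ∈ {0,…,n}`, the map
`(π_0,…,π_{s-1}, 0_{c_{b_i}}) ↦ ((η(π_0),…,η(π_{s-1}),η(ω_i)), (ζ(π_0),…,ζ(π_{s-1}),ζ(ω_i)))`
is a bijection from `P_{i,ρ}` to `F^{0_{c_{\overline{i+1}}},0_{c_i}}_>` (for `i ≥ 1`),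
resp. `F^{0_{c_{\bar 1}},(-1)_{c_{\bar 1}}}_>` (for `i = 0`), preserving the size and the
colour sequence of all the parts except the last. -/
theorem stmt_15 (n : ℕ) (hn : 2 ≤ n) (i : ℕ) (hi : i ≤ n) :
    Set.BijOn
      (fun π : List (ℤ × Option (ℤ × ℤ)) =>
        ((π.dropLast.map (fun a => etaP (a.1, a.2.getD (0, 0)))) ++ [grEta n i],
         (π.dropLast.map (fun a => zetaP (a.1, a.2.getD (0, 0)))) ++ [grZeta n i]))
      (PiRho n i) (FrobSet (2 * n) (grEta n i) (grZeta n i)) ∧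
    ∀ π ∈ PiRho n i,
      -- the size of all the parts except the last is preserved
      ((π.dropLast.map Prod.fst).sum =
        ((π.dropLast.map (fun a => etaP (a.1, a.2.getD (0, 0)))).map Prod.fst).sum +
        ((π.dropLast.map (fun a => zetaP (a.1, a.2.getD (0, 0)))).map Prod.fst).sum) ∧
      -- the colour sequence of all the parts except the last is preserved
      ((π.dropLast.map
          (fun a => ({(a.2.getD (0, 0)).1, (a.2.getD (0, 0)).2} : Multiset ℤ))).sum =
        ((π.dropLast.map (fun a => (etaP (a.1, a.2.getD (0, 0))).2) : List ℤ) : Multiset ℤ) +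
        ((π.dropLast.map (fun a => (zetaP (a.1, a.2.getD (0, 0))).2) : List ℤ) : Multiset ℤ)) := by
  have hground : PVal (2 * n) (grEta n i).2 ∧ PVal (2 * n) (grZeta n i).2 := by
    simp only [grEta, grZeta, PVal]
    split_ifs <;> omega
  refine ⟨⟨fun π hπ => ?_, fun π hπ π' hπ' h => ?_, fun p hp => ?_⟩, fun π hπ => ?_⟩
  · obtain ⟨L, rfl⟩ := exists_eq_map_ofSC_append_of_mem_PiRho hπ
    simp only [List.dropLast_concat, List.map_map, Function.comp_def, ofSC, Option.getD_some,
      Prod.mk.eta]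
    have hL := (map_ofSC_append_mem_PiRho_iff hi).1 hπ
    exact (map_append_mem_FrobSet_iff hL.1).2 ⟨hground.1, hground.2, hL⟩
  · obtain ⟨L, rfl⟩ := exists_eq_map_ofSC_append_of_mem_PiRho hπ
    obtain ⟨L', rfl⟩ := exists_eq_map_ofSC_append_of_mem_PiRho hπ'
    simp only [List.dropLast_concat, List.map_map, Function.comp_def, ofSC, Option.getD_some,
      Prod.mk.eta, Prod.mk.injEq, List.append_cancel_right_eq] at h
    obtain ⟨hval, -, -⟩ := (map_ofSC_append_mem_PiRho_iff hi).1 hπ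
    obtain ⟨hval', -, -⟩ := (map_ofSC_append_mem_PiRho_iff hi).1 hπ'
    rw [← zipWith_mergeP_map_etaP_map_zetaP fun a ha => (hval a ha).2.1, h.1, h.2,
      zipWith_mergeP_map_etaP_map_zetaP fun a ha => (hval' a ha).2.1]
  · obtain ⟨μ, ν⟩ := p
    obtain ⟨L, hL, rfl, rfl⟩ := exists_eq_map_append_of_mem_FrobSet hp
    obtain ⟨-, -, hρ⟩ := (map_append_mem_FrobSet_iff hL).1 hp
    refine ⟨L.map ofSC ++ [(0, bvert n i)], (map_ofSC_append_mem_PiRho_iff hi).2 hρ, ?_⟩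
    simp only [List.dropLast_concat, List.map_map, Function.comp_def, ofSC, Option.getD_some,
      Prod.mk.eta]
  · obtain ⟨L, rfl⟩ := exists_eq_map_ofSC_append_of_mem_PiRho hπ
    simp only [List.dropLast_concat, List.map_map, Function.comp_def, ofSC, Option.getD_some,
      Prod.mk.eta]
    exact ⟨sum_map_fst_eq_add L, sum_map_pair_eq_add L⟩
end
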